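/- arXiv:1602.01438 — 3 statements merged into one kernel-verified Lean document; each statement's English description precedes it below -/
import Mathlib

section
/- Let C be a contraction on a Banach space X satisfying the Ritt-type bound ‖C^n (1 - C)‖ ≤ K/(n+1) for all n ∈ ℕ. Then for every n ≥ 1 and every δ with 0 < δ < 1/2 (and n large enough so that n^{δ+1/2} ≤ n/2), one has the operator-norm bound ‖C^n - exp(n(C - 1))‖ ≤ 2 n^{-2δ} + 2K n^{-(1/2 - δ)}. -/
/-!
Expanding the exponential gives `exp (n (C - 1)) = ∑ₖ pₖ Cᵏ` with the Poisson weights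
`pₖ = e⁻ⁿ nᵏ / k!`, whose mean and variance are both `n`; hence `Cⁿ - exp (n (C - 1))` is the
`p`-average of `Cⁿ - Cᵏ`. In the window `|k - n| ≤ b` the Ritt bound telescopes to
`‖Cⁿ - Cᵏ‖ ≤ |k - n| K / (min k n + 1) ≤ 2 K b / n`; outside it the trivial bound `2` is at most
`2 (k - n)² / b²`, whose average is `2 n / b²` (Chebyshev). Taking `b = n ^ (δ + 1/2)` balances
the two terms.
-/

open NormedSpace
open scoped Nat

noncomputable def poissonWeight (x : ℝ) (k : ℕ) : ℝ := Real.exp (-x) * (x ^ k / k !)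

lemma poissonWeight_nonneg {x : ℝ} (hx : 0 ≤ x) (k : ℕ) : 0 ≤ poissonWeight x k := by
  unfold poissonWeight; positivity

lemma hasSum_poissonWeight (x : ℝ) : HasSum (poissonWeight x) 1 := by
  have h := (Real.exp_eq_exp_ℝ ▸ expSeries_div_hasSum_exp x).mul_left (Real.exp (-x))
  rwa [← Real.exp_add, neg_add_cancel, Real.exp_zero] at h

lemma cast_succ_mul_poissonWeight_succ (x : ℝ) (k : ℕ) :
    (k + 1 : ℝ) * poissonWeight x (k + 1) = x * poissonWeight x k := by
  simp only [poissonWeight, Nat.factorial_succ, Nat.cast_mul, pow_succ]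
  field_simp
  push_cast
  ring

lemma hasSum_cast_mul_poissonWeight (x : ℝ) :
    HasSum (fun k : ℕ => (k : ℝ) * poissonWeight x k) x := by
  rw [← hasSum_nat_add_iff' 1]
  simpa [cast_succ_mul_poissonWeight_succ] using (hasSum_poissonWeight x).mul_left x

lemma hasSum_cast_sq_mul_poissonWeight (x : ℝ) :
    HasSum (fun k : ℕ => (k : ℝ) ^ 2 * poissonWeight x k) (x * (x + 1)) := by
  have hsucc (k : ℕ) : (k + 1 : ℝ) ^ 2 * poissonWeight x (k + 1) =
      x * (k * poissonWeight x k + poissonWeight x k) := by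
    rw [sq, mul_assoc, cast_succ_mul_poissonWeight_succ]; ring
  rw [← hasSum_nat_add_iff' 1]
  simpa [hsucc] using ((hasSum_cast_mul_poissonWeight x).add (hasSum_poissonWeight x)).mul_left x

lemma hasSum_poissonWeight_mul_sub_sq (x : ℝ) :
    HasSum (fun k : ℕ => poissonWeight x k * ((k : ℝ) - x) ^ 2) x := by
  have h := ((hasSum_cast_sq_mul_poissonWeight x).sub
    ((hasSum_cast_mul_poissonWeight x).mul_left (2 * x))).add
    ((hasSum_poissonWeight x).mul_left (x ^ 2))
  rw [show x * (x + 1) - 2 * x * x + x ^ 2 * 1 = x by ring] at h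
  exact h.congr_fun fun k => by ring

section NormedRing

variable {A : Type*} [NormedRing A] {a : A} {K : ℝ}

lemma norm_pow_sub_pow_le_of_ritt (hRitt : ∀ n : ℕ, ‖a ^ n * (1 - a)‖ ≤ K / (n + 1))
    {m M : ℕ} (hmM : m ≤ M) : ‖a ^ m - a ^ M‖ ≤ (M - m : ℕ) * (K / (m + 1)) := by
  have hK : 0 ≤ K := by simpa using (norm_nonneg _).trans (hRitt 0)
  rw [← geom_sum_Ico_mul_neg a hmM, Finset.sum_mul, ← Nat.card_Ico, ← nsmul_eq_mul,
    ← Finset.sum_const]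
  refine norm_sum_le_of_le _ fun j hj => (hRitt j).trans ?_
  gcongr
  exact (Finset.mem_Ico.mp hj).1

lemma norm_pow_sub_pow_le_of_ritt_of_abs_sub_le
    (hRitt : ∀ n : ℕ, ‖a ^ n * (1 - a)‖ ≤ K / (n + 1)) {n k : ℕ} (hn : 0 < n) {b : ℝ}
    (hbn : b ≤ n / 2) (hkn : |(k : ℝ) - n| ≤ b) : ‖a ^ n - a ^ k‖ ≤ 2 * K * b / n := by
  have hK : 0 ≤ K := by simpa using (norm_nonneg _).trans (hRitt 0)
  have hb : 0 ≤ b := (abs_nonneg _).trans hkn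
  obtain ⟨hk₁, hk₂⟩ := abs_le.mp hkn
  have hwindow (m M : ℕ) (hmM : m ≤ M) (hMm : ((M - m : ℕ) : ℝ) ≤ b) (hm : (n : ℝ) / 2 ≤ m + 1) :
      ‖a ^ m - a ^ M‖ ≤ 2 * K * b / n :=
    calc ‖a ^ m - a ^ M‖ ≤ (M - m : ℕ) * (K / (m + 1)) := norm_pow_sub_pow_le_of_ritt hRitt hmM
      _ ≤ b * (K / (n / 2)) := by gcongr
      _ = 2 * K * b / n := by field_simp
  rcases le_total k n with hkn | hnk
  · rw [norm_sub_rev]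
    exact hwindow k n hkn (by rw [Nat.cast_sub hkn]; linarith) (by linarith)
  · exact hwindow n k hnk (by rw [Nat.cast_sub hnk]; linarith) (by linarith)

lemma norm_pow_sub_pow_le_ritt_add_sq (hpow : ∀ k : ℕ, ‖a ^ k‖ ≤ 1)
    (hRitt : ∀ n : ℕ, ‖a ^ n * (1 - a)‖ ≤ K / (n + 1)) {n : ℕ} (hn : 0 < n) {b : ℝ} (hb : 0 < b)
    (hbn : b ≤ n / 2) (k : ℕ) :
    ‖a ^ n - a ^ k‖ ≤ 2 * K * b / n + 2 / b ^ 2 * ((k : ℝ) - n) ^ 2 := by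
  have hK : 0 ≤ K := by simpa using (norm_nonneg _).trans (hRitt 0)
  rcases le_or_gt |(k : ℝ) - n| b with hnear | hfar
  · have := norm_pow_sub_pow_le_of_ritt_of_abs_sub_le hRitt hn hbn hnear
    have : 0 ≤ 2 / b ^ 2 * ((k : ℝ) - n) ^ 2 := by positivity
    linarith
  · have hsq : b ^ 2 ≤ ((k : ℝ) - n) ^ 2 := by
      rw [← sq_abs ((k : ℝ) - n)]; gcongr
    have : 2 ≤ 2 / b ^ 2 * ((k : ℝ) - n) ^ 2 := by
      rw [div_mul_eq_mul_div, le_div_iff₀ (by positivity)]; linarith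
    have : 0 ≤ 2 * K * b / n := by positivity
    have : ‖a ^ n - a ^ k‖ ≤ 2 := (norm_sub_le _ _).trans (by linarith [hpow n, hpow k])
    linarith

end NormedRing

section BanachAlgebra

variable {A : Type*} [NormedRing A] [NormedAlgebra ℝ A] [CompleteSpace A]

lemma exp_smul_sub_one (x : ℝ) (a : A) : exp (x • (a - 1)) = Real.exp (-x) • exp (x • a) := by
  have hcomm : Commute (x • a) (-x • 1) := ((Commute.one_right a).smul_right _).smul_left x
  rw [smul_sub, sub_eq_add_neg, ← neg_smul, exp_add_of_commute_of_mem_ball (𝕂 := ℝ) hcomm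
      ((expSeries_radius_eq_top ℝ A).symm ▸ edist_lt_top _ _)
      ((expSeries_radius_eq_top ℝ A).symm ▸ edist_lt_top _ _), ← Algebra.algebraMap_eq_smul_one,
    ← algebraMap_exp_comm, Algebra.algebraMap_eq_smul_one, Real.exp_eq_exp_ℝ, mul_smul_comm,
    mul_one]

lemma hasSum_poissonWeight_smul_pow (x : ℝ) (a : A) :
    HasSum (fun k => poissonWeight x k • a ^ k) (exp (x • (a - 1))) := by
  rw [exp_smul_sub_one]
  refine ((exp_series_hasSum_exp' (𝕂 := ℝ) (x • a)).const_smul (Real.exp (-x))).congr_fun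
    fun k => ?_
  rw [smul_pow, smul_smul, smul_smul, poissonWeight, div_eq_mul_inv]
  congr 1
  ring

lemma norm_pow_sub_exp_smul_sub_one_le {a : A} {K : ℝ} (hpow : ∀ k : ℕ, ‖a ^ k‖ ≤ 1)
    (hRitt : ∀ n : ℕ, ‖a ^ n * (1 - a)‖ ≤ K / (n + 1)) {n : ℕ} (hn : 0 < n) {b : ℝ} (hb : 0 < b)
    (hbn : b ≤ n / 2) :
    ‖a ^ n - exp ((n : ℝ) • (a - 1))‖ ≤ 2 * K * b / n + 2 * n / b ^ 2 := by
  have hdiff : HasSum (fun k => poissonWeight n k • (a ^ n - a ^ k))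
      (a ^ n - exp ((n : ℝ) • (a - 1))) := by
    simpa only [smul_sub, one_smul] using
      ((hasSum_poissonWeight n).smul_const (a ^ n)).sub (hasSum_poissonWeight_smul_pow n a)
  have hmajorant : HasSum
      (fun k => poissonWeight n k * (2 * K * b / n + 2 / b ^ 2 * ((k : ℝ) - n) ^ 2))
      (2 * K * b / n + 2 * n / b ^ 2) := by
    have h := ((hasSum_poissonWeight n).mul_left (2 * K * b / n)).add
      ((hasSum_poissonWeight_mul_sub_sq n).mul_left (2 / b ^ 2))
    rw [mul_one, ← mul_div_right_comm] at h
    exact h.congr_fun fun k => by ring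
  refine hdiff.norm_le_of_bounded hmajorant fun k => ?_
  have hweight : 0 ≤ poissonWeight n k := poissonWeight_nonneg n.cast_nonneg k
  rw [norm_smul, Real.norm_of_nonneg hweight]
  exact mul_le_mul_of_nonneg_left (norm_pow_sub_pow_le_ritt_add_sq hpow hRitt hn hb hbn k) hweight

end BanachAlgebra

lemma ContinuousLinearMap.norm_pow_le_one {X : Type*} [NormedAddCommGroup X] [NormedSpace ℝ X]
    {C : X →L[ℝ] X} (hC : ‖C‖ ≤ 1) : ∀ k : ℕ, ‖C ^ k‖ ≤ 1
  | 0 => norm_id_le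
  | k + 1 => (norm_pow_le' C k.succ_pos).trans (pow_le_one₀ (norm_nonneg C) hC)

theorem ritt_chernoff_norm_estimate_general {X : Type*} [NormedAddCommGroup X] [NormedSpace ℝ X]
    [CompleteSpace X] (C : X →L[ℝ] X) (hC : ‖C‖ ≤ 1) (K : ℝ)
    (hRitt : ∀ n : ℕ, ‖C ^ n * (1 - C)‖ ≤ K / (n + 1))
    (n : ℕ) (hn : 1 ≤ n) (δ : ℝ)
    (hlarge : (n : ℝ) ^ (δ + 1 / 2) ≤ n / 2) :
    ‖C ^ n - exp ((n : ℝ) • (C - 1))‖ ≤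
      2 * (n : ℝ) ^ (-(2 * δ)) + 2 * K * (n : ℝ) ^ (-(1 / 2 - δ)) := by
  have hn₀ : (0 : ℝ) < n := by exact_mod_cast hn
  set b := (n : ℝ) ^ (δ + 1 / 2)
  have hb_div : b / n = (n : ℝ) ^ (-(1 / 2 - δ)) := by
    rw [← Real.rpow_sub_one hn₀.ne']; ring_nf
  have hdiv_b_sq : n / b ^ 2 = (n : ℝ) ^ (-(2 * δ)) := by
    rw [div_eq_iff (by positivity), ← Real.rpow_natCast, ← Real.rpow_mul hn₀.le,
      ← Real.rpow_add hn₀]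
    conv_lhs => rw [← Real.rpow_one (n : ℝ)]
    congr 1; push_cast; ring
  calc ‖C ^ n - exp ((n : ℝ) • (C - 1))‖ ≤ 2 * K * b / n + 2 * n / b ^ 2 :=
        norm_pow_sub_exp_smul_sub_one_le (ContinuousLinearMap.norm_pow_le_one hC) hRitt hn
          (by positivity) hlarge
    _ = 2 * (n / b ^ 2) + 2 * K * (b / n) := by ring
    _ = _ := by rw [hb_div, hdiv_b_sq]

theorem ritt_chernoff_norm_estimate {X : Type*} [NormedAddCommGroup X] [NormedSpace ℝ X]
    [CompleteSpace X] (C : X →L[ℝ] X) (hC : ‖C‖ ≤ 1) (K : ℝ) (hK : 0 < K)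
    (hRitt : ∀ n : ℕ, ‖C ^ n * (1 - C)‖ ≤ K / (n + 1))
    (n : ℕ) (hn : 1 ≤ n) (δ : ℝ) (hδ0 : 0 < δ) (hδ : δ < 1 / 2)
    (hlarge : (n : ℝ) ^ (δ + 1 / 2) ≤ n / 2) :
    ‖C ^ n - exp ((n : ℝ) • (C - 1))‖ ≤
      2 * (n : ℝ) ^ (-(2 * δ)) + 2 * K * (n : ℝ) ^ (-(1 / 2 - δ)) :=
  ritt_chernoff_norm_estimate_general C hC K hRitt n hn δ hlarge
end

section
/- Scalar Chernoff estimate: there exists a constant M > 0 such that for all n ≥ 1 and all λ ∈ [0,1], |λ^n - e^{n(λ - 1)}| ≤ M/n. -/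
/-!
Since `λ ≤ e^{λ-1} ≤ 1`, comparing `n`-th powers costs at most `n e^{(n-1)(λ-1)}` times the gap
`e^{λ-1} - λ ≤ (1-λ)^2`. With `y = n(1-λ)` the resulting bound `n (1-λ)^2 e^{-(n-1)(1-λ)}` is at
most `e · y^2 e^{-y} / n ≤ 2e / n`.
-/

open Real Set

lemma sq_mul_exp_le_two {x : ℝ} (hx : x ≤ 0) : x ^ 2 * exp x ≤ 2 := by
  have hquad := quadratic_le_exp_of_nonneg (neg_nonneg.mpr hx)
  have hinv : exp (-x) * exp x = 1 := by rw [← exp_add, neg_add_cancel, exp_zero]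
  nlinarith [exp_pos x]

lemma abs_pow_sub_exp_sub_one_pow_le {l : ℝ} (hl : l ∈ Icc (0 : ℝ) 2) (n : ℕ) :
    |l ^ n - exp (l - 1) ^ n| ≤ (l - 1) ^ 2 * n * exp (l - 1) ^ (n - 1) := by
  obtain ⟨hl0, hl2⟩ := hl
  have hle : l ≤ exp (l - 1) := by linarith [add_one_le_exp (l - 1)]
  have hmax : max |l| |exp (l - 1)| = exp (l - 1) := by
    rw [abs_of_nonneg hl0, abs_of_pos (exp_pos _), max_eq_right hle]
  -- `exp x - 1 - x` with `x = l - 1` is `exp (l - 1) - l`.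
  have hdiff : |l - exp (l - 1)| ≤ (l - 1) ^ 2 := by
    rw [abs_sub_comm]
    simpa using abs_exp_sub_one_sub_id_le (x := l - 1) (abs_le.mpr ⟨by linarith, by linarith⟩)
  calc |l ^ n - exp (l - 1) ^ n| ≤ |l - exp (l - 1)| * n * max |l| |exp (l - 1)| ^ (n - 1) :=
        abs_pow_sub_pow_le ..
    _ ≤ (l - 1) ^ 2 * n * exp (l - 1) ^ (n - 1) := by rw [hmax]; gcongr

lemma nat_mul_sq_mul_exp_pow_sub_one_le {x : ℝ} (hx : x ∈ Icc (-1 : ℝ) 0) {n : ℕ} (hn : 1 ≤ n) :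
    n * x ^ 2 * exp x ^ (n - 1) ≤ 2 * exp 1 / n := by
  obtain ⟨hx1, hx0⟩ := hx
  have hnpos : (0 : ℝ) < n := by exact_mod_cast hn
  have hpow : exp x ^ (n - 1) = exp (n * x) * exp (-x) := by
    rw [exp_nat_mul, ← pow_sub_one_mul (Nat.one_le_iff_ne_zero.mp hn), mul_assoc, ← exp_add,
      add_neg_cancel, exp_zero, mul_one]
  rw [le_div_iff₀ hnpos]
  calc n * x ^ 2 * exp x ^ (n - 1) * n = (n * x) ^ 2 * exp (n * x) * exp (-x) := by
        rw [hpow]; ring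
    _ ≤ 2 * exp 1 :=
        mul_le_mul (sq_mul_exp_le_two (mul_nonpos_of_nonneg_of_nonpos hnpos.le hx0))
          (exp_le_exp.mpr (by linarith)) (exp_pos _).le zero_le_two

theorem scalar_chernoff_estimate :
    ∃ M : ℝ, 0 < M ∧ ∀ n : ℕ, 1 ≤ n → ∀ l ∈ Set.Icc (0 : ℝ) 1,
      |l ^ n - Real.exp ((n : ℝ) * (l - 1))| ≤ M / n := by
  refine ⟨2 * exp 1, by positivity, fun n hn l hl => ?_⟩
  rw [exp_nat_mul]
  calc |l ^ n - exp (l - 1) ^ n| ≤ (l - 1) ^ 2 * n * exp (l - 1) ^ (n - 1) :=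
        abs_pow_sub_exp_sub_one_pow_le ⟨hl.1, by linarith [hl.2]⟩ n
    _ = n * (l - 1) ^ 2 * exp (l - 1) ^ (n - 1) := by ring
    _ ≤ 2 * exp 1 / n :=
        nat_mul_sq_mul_exp_pow_sub_one_le ⟨by linarith [hl.1], by linarith [hl.2]⟩ hn
end

section
/- Euler formula for nonnegative self-adjoint operators (scalar reduction): there exists a constant M > 0 such that for all n ≥ 1, t ≥ 0, and all λ ≥ 0, |(1 + tλ/n)^{-n} - e^{-tλ}| ≤ M/n. -/
/-!
Put `u = x / n`, `a = (1 + u)⁻¹` and `b = exp (-u)`, so that the quantity to bound is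
`aⁿ - bⁿ` with `0 < b ≤ a ≤ 1`; in particular it is at most `1`. Since `b ≥ 1 - u = (1 - u²) a`,
we have `a - b ≤ u² a`, and the mean value bound for `aⁿ - bⁿ` gives
`aⁿ - bⁿ ≤ n u² aⁿ = n u² / (1 + u)ⁿ`. Keeping only the quadratic term of the binomial expansion
of `(1 + u)ⁿ`, this is at most `2 / (n - 1)`, uniformly in `u ≥ 0`.
-/

theorem choose_mul_pow_le_one_add_pow {R : Type*} [CommSemiring R] [PartialOrder R]
    [IsOrderedRing R] {u : R} (hu : 0 ≤ u) (n k : ℕ) :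
    (n.choose k : R) * u ^ k ≤ (1 + u) ^ n := by
  rcases le_or_gt k n with hkn | hnk
  · rw [add_comm, add_pow]
    simp only [one_pow, mul_one]
    calc (n.choose k : R) * u ^ k = u ^ k * n.choose k := mul_comm _ _
      _ ≤ ∑ i ∈ Finset.range (n + 1), u ^ i * n.choose i :=
        Finset.single_le_sum (f := fun i => u ^ i * (n.choose i : R))
          (fun i _ => mul_nonneg (pow_nonneg hu i) (Nat.cast_nonneg _))
          (Finset.mem_range.mpr (Nat.lt_succ_of_le hkn))
  · rw [Nat.choose_eq_zero_of_lt hnk, Nat.cast_zero, zero_mul]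
    exact pow_nonneg (add_nonneg zero_le_one hu) n

namespace Real

theorem exp_neg_le_inv_one_add {u : ℝ} (hu : -1 < u) : exp (-u) ≤ (1 + u)⁻¹ := by
  rw [exp_neg]
  exact inv_anti₀ (by linarith) (by linarith [add_one_le_exp u])

theorem inv_one_add_sub_exp_neg_le {u : ℝ} (hu : 1 + u ≠ 0) :
    (1 + u)⁻¹ - exp (-u) ≤ u ^ 2 * (1 + u)⁻¹ :=
  calc (1 + u)⁻¹ - exp (-u) ≤ (1 + u)⁻¹ - (1 - u) := by linarith [one_sub_le_exp_neg u]
    _ = u ^ 2 * (1 + u)⁻¹ := by field_simp; ring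

theorem inv_one_add_pow_sub_exp_neg_pow_le {u : ℝ} (hu : 0 ≤ u) (n : ℕ) :
    ((1 + u)⁻¹) ^ n - exp (-u) ^ n ≤ n * u ^ 2 * ((1 + u) ^ n)⁻¹ := by
  have h1u : 0 < 1 + u := by linarith
  have hba : exp (-u) ≤ (1 + u)⁻¹ := exp_neg_le_inv_one_add (by linarith)
  have hmax : max |(1 + u)⁻¹| |exp (-u)| = (1 + u)⁻¹ := by
    rw [abs_of_pos (inv_pos.mpr h1u), abs_of_pos (exp_pos _), max_eq_left hba]
  calc ((1 + u)⁻¹) ^ n - exp (-u) ^ n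
      ≤ |(1 + u)⁻¹ - exp (-u)| * n * ((1 + u)⁻¹) ^ (n - 1) := by
        simpa only [hmax] using
          (le_abs_self _).trans (abs_pow_sub_pow_le (1 + u)⁻¹ (exp (-u)) n)
    _ ≤ u ^ 2 * (1 + u)⁻¹ * n * ((1 + u)⁻¹) ^ (n - 1) := by
        rw [abs_of_nonneg (sub_nonneg.mpr hba)]
        gcongr
        exact inv_one_add_sub_exp_neg_le h1u.ne'
    _ = n * u ^ 2 * ((1 + u) ^ n)⁻¹ := by
        rcases n with _ | n
        · simp
        · rw [Nat.add_sub_cancel, pow_succ' (1 + u), mul_inv, inv_pow]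
          ring

theorem nat_mul_sq_mul_inv_one_add_pow_le {u : ℝ} (hu : 0 ≤ u) {n : ℕ} (hn : 2 ≤ n) :
    n * u ^ 2 * ((1 + u) ^ n)⁻¹ ≤ 2 / (n - 1) := by
  have hn1 : (0 : ℝ) < n - 1 := by
    have : (2 : ℝ) ≤ n := by exact_mod_cast hn
    linarith
  have hquad : n * (n - 1) / 2 * u ^ 2 ≤ (1 + u) ^ n := by
    simpa only [Nat.cast_choose_two] using choose_mul_pow_le_one_add_pow hu n 2
  rw [← div_eq_mul_inv, div_le_div_iff₀ (by positivity) hn1]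
  linarith

theorem abs_inv_one_add_div_pow_sub_exp_neg_le {x : ℝ} (hx : 0 ≤ x) {n : ℕ} (hn : 1 ≤ n) :
    |((1 + x / n) ^ n)⁻¹ - exp (-x)| ≤ 4 / n := by
  have hn0 : (0 : ℝ) < n := by exact_mod_cast hn
  set u := x / n
  have hu : 0 ≤ u := div_nonneg hx hn0.le
  have hexp : exp (-x) = exp (-u) ^ n := by
    rw [← exp_nat_mul, mul_neg, mul_div_cancel₀ x hn0.ne']
  have hba : exp (-u) ^ n ≤ ((1 + u)⁻¹) ^ n :=
    pow_le_pow_left₀ (exp_pos _).le (exp_neg_le_inv_one_add (by linarith)) n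
  rw [hexp, ← inv_pow, abs_of_nonneg (sub_nonneg.mpr hba)]
  rcases hn.eq_or_lt with rfl | hn2
  · have ha1 : (1 + u)⁻¹ ≤ 1 := inv_le_one_of_one_le₀ (by linarith)
    rw [pow_one, pow_one, Nat.cast_one]
    linarith [(exp_pos (-u)).le]
  · have hn2' : (2 : ℝ) ≤ n := by exact_mod_cast hn2
    calc ((1 + u)⁻¹) ^ n - exp (-u) ^ n ≤ n * u ^ 2 * ((1 + u) ^ n)⁻¹ :=
          inv_one_add_pow_sub_exp_neg_pow_le hu n
      _ ≤ 2 / (n - 1) := nat_mul_sq_mul_inv_one_add_pow_le hu hn2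
      _ ≤ 4 / n := by
          rw [div_le_div_iff₀ (by linarith) hn0]
          linarith

end Real

theorem scalar_euler_estimate :
    ∃ M : ℝ, 0 < M ∧ ∀ n : ℕ, 1 ≤ n → ∀ t : ℝ, 0 ≤ t → ∀ l : ℝ, 0 ≤ l →
      |((1 + t * l / n) ^ n)⁻¹ - Real.exp (-(t * l))| ≤ M / n :=
  ⟨4, by norm_num, fun _ hn _ ht _ hl =>
    Real.abs_inv_one_add_div_pow_sub_exp_neg_le (mul_nonneg ht hl) hn⟩
end
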